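/- Deterministic version of Proposition 2.1, second estimate: let T > 0 and let φ : [0,T] → H be Bochner measurable with ∫₀ᵀ ‖φ_s‖² ds < ∞, and define ν_t = ∫₀ᵗ S_{t−s} φ_s ds. Then the map t ↦ ν_t from [0,T] to H is differentiable with derivative ν̇_t = ∫₀ᵗ S'_{t−s} φ_s ds, and for every t ∈ [0,T] one has ‖ν̇_t‖² ≤ T · ∫₀ᵀ ‖φ_s‖² ds. -/

import Mathlib

/-!
In the sine basis `S_t` and `S'_t` are diagonal, with multipliers `sin (√α t) / √α` and
`cos (√α t)`. These are bounded by `|t|` and `1` and are `1`-Lipschitz in `t`, so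
`‖S_t‖ ≤ |t|`, `‖S_t - S_r‖ ≤ |t - r|`, `‖S'_t‖ ≤ 1`, and dominated convergence in the
coefficient series gives `∂ₜ S_t h = S'_t h`.

Since `S_0 = 0`, `ν_r = ∫_{(0,T]} S_{(r-s)⁺} φ_s ds` for `r ∈ [0,T]`. This integrand is
`‖φ_s‖`-Lipschitz in `r` and differentiable at `t` for every `s ≠ t`, so we may differentiate
under the integral sign: `ν̇_t = ∫₀ᵗ S'_{t-s} φ_s ds`. Then `‖ν̇_t‖ ≤ ∫₀ᵗ ‖φ_s‖ ds`, and
Cauchy–Schwarz gives `‖ν̇_t‖² ≤ t ∫₀ᵗ ‖φ_s‖² ds`.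
-/

open MeasureTheory Real
open scoped InnerProductSpace ENNReal

noncomputable section

/-- Lebesgue measure on the interval `(0, L)`. -/
def μL (L : ℝ) : Measure ℝ := volume.restrict (Set.Ioo (0:ℝ) L)

instance (L : ℝ) : IsFiniteMeasure (μL L) := by
  constructor
  unfold μL
  rw [Measure.restrict_apply_univ, Real.volume_Ioo]
  exact ENNReal.ofReal_lt_top

/-- The Hilbert space `H = L²((0,L), ℝ)`. -/
abbrev Hsp (L : ℝ) := Lp ℝ 2 (μL L)

/-- The function `ξ ↦ √(2/L) · sin(kπξ/L)`. -/
def efun (L : ℝ) (k : ℕ) : ℝ → ℝ :=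
  fun ξ => Real.sqrt (2 / L) * Real.sin ((k : ℝ) * π * ξ / L)

lemma efun_continuous (L : ℝ) (k : ℕ) : Continuous (efun L k) := by
  unfold efun; fun_prop

lemma efun_bound (L : ℝ) (k : ℕ) (ξ : ℝ) : ‖efun L k ξ‖ ≤ Real.sqrt (2 / L) := by
  have h1 : |Real.sin ((k : ℝ) * π * ξ / L)| ≤ 1 :=
    abs_le.mpr ⟨Real.neg_one_le_sin _, Real.sin_le_one _⟩
  calc ‖efun L k ξ‖ = |Real.sqrt (2 / L)| * |Real.sin ((k : ℝ) * π * ξ / L)| := by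
        rw [Real.norm_eq_abs, efun, abs_mul]
    _ ≤ Real.sqrt (2 / L) * 1 := by
        rw [abs_of_nonneg (Real.sqrt_nonneg _)]
        exact mul_le_mul_of_nonneg_left h1 (Real.sqrt_nonneg _)
    _ = Real.sqrt (2 / L) := mul_one _

lemma efun_memℒp (L : ℝ) (k : ℕ) : MemLp (efun L k) 2 (μL L) :=
  (memLp_top_of_bound (efun_continuous L k).aestronglyMeasurable _
      (ae_of_all _ (efun_bound L k))).mono_exponent le_top

/-- The eigenfunction `e_{k+1}` as an element of `H` (so `eb L k` is `e_{k+1}`,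
i.e. the family `eb L` runs over `e_k`, `k ≥ 1`). -/
def eb (L : ℝ) (k : ℕ) : Hsp L := (efun_memℒp L (k + 1)).toLp (efun L (k + 1))

/-- The eigenvalue `α_{k+1} = (k+1)²π²/L²` (so `alphaK L` runs over `α_k`, `k ≥ 1`). -/
def alphaK (L : ℝ) (k : ℕ) : ℝ := ((k : ℝ) + 1) ^ 2 * π ^ 2 / L ^ 2

/-- The Fourier coefficient `⟨u, e_{k+1}⟩`. -/
def coeff (L : ℝ) (u : Hsp L) (k : ℕ) : ℝ := ⟪u, eb L k⟫_ℝ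

/-- The heat Green operator `G_t h = Σ_{k≥1} e^{−α_k t} ⟨h, e_k⟩ e_k`. -/
def Gop (L t : ℝ) (h : Hsp L) : Hsp L :=
  ∑' k, (Real.exp (-(alphaK L k) * t) * coeff L h k) • eb L k

/-- The wave Green operator `S_t h = Σ_{k≥1} (sin(√α_k t)/√α_k) ⟨h, e_k⟩ e_k`. -/
def Sop (L t : ℝ) (h : Hsp L) : Hsp L :=
  ∑' k, ((Real.sin (Real.sqrt (alphaK L k) * t) / Real.sqrt (alphaK L k)) * coeff L h k) • eb L k

/-- The derived wave Green operator `S'_t h = Σ_{k≥1} cos(√α_k t) ⟨h, e_k⟩ e_k`. -/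
def Sop' (L t : ℝ) (h : Hsp L) : Hsp L :=
  ∑' k, (Real.cos (Real.sqrt (alphaK L k) * t) * coeff L h k) • eb L k

/-- The second derived wave Green operator
`S''_t h = −Σ_{k≥1} √α_k sin(√α_k t) ⟨h, e_k⟩ e_k`. -/
def Sop'' (L t : ℝ) (h : Hsp L) : Hsp L :=
  -∑' k, (Real.sqrt (alphaK L k) * Real.sin (Real.sqrt (alphaK L k) * t) * coeff L h k) • eb L k


section SineSystem

variable {L : ℝ}

lemma integral_cos_int_mul (hL : L ≠ 0) (j : ℤ) :
    ∫ x in (0:ℝ)..L, cos (j * π / L * x) = if j = 0 then L else 0 := by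
  split_ifs with hj
  · simp [hj]
  · have hc : (j : ℝ) * π / L ≠ 0 := div_ne_zero (mul_ne_zero (by exact_mod_cast hj) pi_ne_zero) hL
    rw [intervalIntegral.integral_comp_mul_left cos hc, integral_cos,
      div_mul_cancel₀ _ hL, sin_int_mul_pi]
    simp

lemma integral_sin_mul_sin (hL : L ≠ 0) {m n : ℕ} (hn : n ≠ 0) :
    ∫ x in (0:ℝ)..L, sin (m * π * x / L) * sin (n * π * x / L) = if m = n then L / 2 else 0 := by
  have product_to_sum : ∀ x, sin (m * π * x / L) * sin (n * π * x / L)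
      = (cos (((m - n : ℤ) : ℝ) * π / L * x) - cos (((m + n : ℤ) : ℝ) * π / L * x)) / 2 := by
    intro x
    push_cast
    rw [show ((m : ℝ) - n) * π / L * x = m * π * x / L - n * π * x / L by ring,
      show ((m : ℝ) + n) * π / L * x = m * π * x / L + n * π * x / L by ring, cos_sub, cos_add]
    ring
  have hint : ∀ j : ℤ, IntervalIntegrable (fun x => cos (j * π / L * x)) volume 0 L :=
    fun j => (by fun_prop : Continuous fun x => cos (j * π / L * x)).intervalIntegrable _ _
  simp_rw [product_to_sum]
  rw [intervalIntegral.integral_div, intervalIntegral.integral_sub (hint _) (hint _),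
    integral_cos_int_mul hL, integral_cos_int_mul hL]
  have hsum : (m + n : ℤ) ≠ 0 := by omega
  by_cases hmn : m = n
  · simp [hmn, hn]
  · have hdiff : (m - n : ℤ) ≠ 0 := by omega
    simp [hmn, hdiff, hsum]

lemma orthonormal_eb (hL : 0 < L) : Orthonormal ℝ (eb L) := by
  rw [orthonormal_iff_ite]
  intro j k
  have hcoe : ∀ i, eb L i =ᵐ[μL L] efun L (i + 1) := fun i => (efun_memℒp L (i + 1)).coeFn_toLp
  have hsq : √(2 / L) * √(2 / L) = 2 / L := mul_self_sqrt (by positivity)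
  calc ⟪eb L j, eb L k⟫_ℝ = ∫ x, efun L (j + 1) x * efun L (k + 1) x ∂μL L := by
        rw [L2.inner_def]
        refine integral_congr_ae ?_
        filter_upwards [hcoe j, hcoe k] with x hj hk
        simp [hj, hk, mul_comm]
    _ = 2 / L * ∫ x in (0:ℝ)..L,
          sin ((j + 1 : ℕ) * π * x / L) * sin ((k + 1 : ℕ) * π * x / L) := by
        rw [intervalIntegral.integral_of_le hL.le, integral_Ioc_eq_integral_Ioo,
          ← integral_const_mul, μL]
        congr 1 with x
        rw [efun, efun]
        linear_combination (sin ((j + 1 : ℕ) * π * x / L) * sin ((k + 1 : ℕ) * π * x / L)) * hsq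
    _ = if j = k then 1 else 0 := by
        rw [integral_sin_mul_sin hL.ne' k.succ_ne_zero]
        by_cases hjk : j = k
        · simpa [hjk] using hL.ne'
        · simp [hjk]

end SineSystem

section SpectralMultiplier

open Filter Topology

variable {ι E : Type*} [NormedAddCommGroup E] [InnerProductSpace ℝ E] {v : ι → E}

def spectralMultiplier (v : ι → E) (c : ι → ℝ) (h : E) : E :=
  ∑' k, (c k * ⟪h, v k⟫_ℝ) • v k

theorem Orthonormal.summable_smul [CompleteSpace E] (hv : Orthonormal ℝ v) {a : ι → ℝ}
    (ha : Summable fun k => a k ^ 2) : Summable fun k => a k • v k := by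
  simpa using (hv.orthogonalFamily.summable_iff_norm_sq_summable a).mpr (by simpa using ha)

theorem Orthonormal.norm_tsum_smul_sq [CompleteSpace E] (hv : Orthonormal ℝ v) {a : ι → ℝ}
    (ha : Summable fun k => a k ^ 2) : ‖∑' k, a k • v k‖ ^ 2 = ∑' k, a k ^ 2 := by
  have hfinite : ∀ s : Finset ι, ‖∑ k ∈ s, a k • v k‖ ^ 2 = ∑ k ∈ s, a k ^ 2 := by
    simpa using hv.orthogonalFamily.norm_sum a
  refine (HasSum.tsum_eq ?_).symm
  exact (((continuous_norm.pow 2).tendsto _).comp (hv.summable_smul ha).hasSum).congr hfinite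

lemma sq_mul_le_sq_mul {c M : ℝ} (hc : |c| ≤ M) (x : ℝ) : (c * x) ^ 2 ≤ M ^ 2 * x ^ 2 := by
  rw [mul_pow]
  exact mul_le_mul_of_nonneg_right (sq_le_sq' (abs_le.mp hc).1 (abs_le.mp hc).2) (sq_nonneg x)

theorem Orthonormal.summable_inner_sq (hv : Orthonormal ℝ v) (h : E) :
    Summable fun k => ⟪h, v k⟫_ℝ ^ 2 := by
  simpa [real_inner_comm] using hv.inner_products_summable h

theorem Orthonormal.tsum_inner_sq_le (hv : Orthonormal ℝ v) (h : E) :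
    ∑' k, ⟪h, v k⟫_ℝ ^ 2 ≤ ‖h‖ ^ 2 := by
  simpa [real_inner_comm] using hv.tsum_inner_products_le h

theorem Orthonormal.summable_mul_inner_sq (hv : Orthonormal ℝ v) {c : ι → ℝ} {M : ℝ}
    (hc : ∀ k, |c k| ≤ M) (h : E) : Summable fun k => (c k * ⟪h, v k⟫_ℝ) ^ 2 :=
  .of_nonneg_of_le (fun _ => sq_nonneg _) (fun k => sq_mul_le_sq_mul (hc k) _)
    ((hv.summable_inner_sq h).mul_left (M ^ 2))

theorem Orthonormal.norm_spectralMultiplier_le [CompleteSpace E] (hv : Orthonormal ℝ v)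
    {c : ι → ℝ} {M : ℝ} (hM : 0 ≤ M) (hc : ∀ k, |c k| ≤ M) (h : E) :
    ‖spectralMultiplier v c h‖ ≤ M * ‖h‖ := by
  refine le_of_sq_le_sq ?_ (by positivity)
  calc ‖spectralMultiplier v c h‖ ^ 2 = ∑' k, (c k * ⟪h, v k⟫_ℝ) ^ 2 :=
        hv.norm_tsum_smul_sq (hv.summable_mul_inner_sq hc h)
    _ ≤ ∑' k, M ^ 2 * ⟪h, v k⟫_ℝ ^ 2 :=
        (hv.summable_mul_inner_sq hc h).tsum_le_tsum (fun k => sq_mul_le_sq_mul (hc k) _)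
          ((hv.summable_inner_sq h).mul_left _)
    _ ≤ M ^ 2 * ‖h‖ ^ 2 := by
        rw [tsum_mul_left]
        gcongr
        exact hv.tsum_inner_sq_le h
    _ = (M * ‖h‖) ^ 2 := by ring

theorem Orthonormal.summable_mul_inner_smul [CompleteSpace E] (hv : Orthonormal ℝ v) {c : ι → ℝ}
    {M : ℝ} (hc : ∀ k, |c k| ≤ M) (h : E) : Summable fun k => (c k * ⟪h, v k⟫_ℝ) • v k :=
  hv.summable_smul (hv.summable_mul_inner_sq hc h)

theorem Orthonormal.spectralMultiplier_sub [CompleteSpace E] (hv : Orthonormal ℝ v)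
    {c₁ c₂ : ι → ℝ} {M₁ M₂ : ℝ} (hc₁ : ∀ k, |c₁ k| ≤ M₁) (hc₂ : ∀ k, |c₂ k| ≤ M₂) (h : E) :
    spectralMultiplier v c₁ h - spectralMultiplier v c₂ h = spectralMultiplier v (c₁ - c₂) h := by
  rw [spectralMultiplier, spectralMultiplier, spectralMultiplier,
    ← (hv.summable_mul_inner_smul hc₁ h).tsum_sub (hv.summable_mul_inner_smul hc₂ h)]
  simp only [Pi.sub_apply, sub_mul, sub_smul]

theorem smul_spectralMultiplier (a : ℝ) (c : ι → ℝ) (h : E) :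
    a • spectralMultiplier v c h = spectralMultiplier v (a • c) h := by
  rw [spectralMultiplier, spectralMultiplier, ← tsum_const_smul'']
  simp only [smul_smul, Pi.smul_apply, smul_eq_mul, mul_assoc]

theorem Orthonormal.tendsto_spectralMultiplier_zero [CompleteSpace E] (hv : Orthonormal ℝ v)
    {α : Type*} {l : Filter α} {c : α → ι → ℝ} {M : ℝ} (hc : ∀ᶠ r in l, ∀ k, |c r k| ≤ M)
    (hlim : ∀ k, Tendsto (c · k) l (𝓝 0)) (h : E) :
    Tendsto (fun r => spectralMultiplier v (c r) h) l (𝓝 0) := by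
  have hsq : Tendsto (fun r => ∑' k, (c r k * ⟪h, v k⟫_ℝ) ^ 2) l (𝓝 0) := by
    simpa using tendsto_tsum_of_dominated_convergence (g := fun _ => (0 : ℝ))
      (f := fun r k => (c r k * ⟪h, v k⟫_ℝ) ^ 2) ((hv.summable_inner_sq h).mul_left (M ^ 2))
      (fun k => by simpa using ((hlim k).mul_const ⟪h, v k⟫_ℝ).pow 2)
      (hc.mono fun r hr k => by
        simpa only [norm_pow, norm_eq_abs, sq_abs] using sq_mul_le_sq_mul (hr k) _)
  have hnorm : ∀ᶠ r in l, √(∑' k, (c r k * ⟪h, v k⟫_ℝ) ^ 2) = ‖spectralMultiplier v (c r) h‖ :=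
    hc.mono fun r hr => by
      rw [← hv.norm_tsum_smul_sq (hv.summable_mul_inner_sq hr h), sqrt_sq (norm_nonneg _)]
      rfl
  rw [tendsto_zero_iff_norm_tendsto_zero]
  simpa using (hsq.sqrt).congr' hnorm

theorem Orthonormal.hasDerivAt_spectralMultiplier [CompleteSpace E] (hv : Orthonormal ℝ v)
    {c : ℝ → ι → ℝ} {c' : ι → ℝ} {B : ℝ → ℝ} {K t : ℝ} (hc : ∀ x k, |c x k| ≤ B x)
    (hlip : ∀ x y k, |c x k - c y k| ≤ K * |x - y|) (hc' : ∀ k, |c' k| ≤ K)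
    (hderiv : ∀ k, HasDerivAt (c · k) (c' k) t) (h : E) :
    HasDerivAt (fun x => spectralMultiplier v (c x) h) (spectralMultiplier v c' h) t := by
  rw [hasDerivAt_iff_tendsto_slope, ← tendsto_sub_nhds_zero_iff]
  have hne : ∀ᶠ r in 𝓝[≠] t, r ≠ t := self_mem_nhdsWithin
  have hquot : ∀ r ≠ t, ∀ k, |((r - t)⁻¹ • (c r - c t)) k| ≤ K := fun r hr k => by
    rw [Pi.smul_apply, Pi.sub_apply, smul_eq_mul, abs_mul, abs_inv,
      inv_mul_le_iff₀ (abs_pos.mpr (sub_ne_zero.mpr hr))]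
    exact (hlip r t k).trans_eq (mul_comm _ _)
  refine (hv.tendsto_spectralMultiplier_zero (c := fun r => (r - t)⁻¹ • (c r - c t) - c')
    (M := K + K) (hne.mono fun r hr k => (abs_sub _ _).trans (add_le_add (hquot r hr k) (hc' k)))
    (fun k => ?_) h).congr' (hne.mono fun r hr => ?_)
  · simpa [slope_def_field, div_eq_inv_mul] using tendsto_sub_nhds_zero_iff.mpr
      (hasDerivAt_iff_tendsto_slope.mp (hderiv k))
  · dsimp only
    rw [slope_def_module, hv.spectralMultiplier_sub (hc r) (hc t), smul_spectralMultiplier,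
      hv.spectralMultiplier_sub (hquot r hr) hc']

theorem Orthonormal.aestronglyMeasurable_spectralMultiplier [Countable ι] [CompleteSpace E]
    (hv : Orthonormal ℝ v) {α : Type*} [MeasurableSpace α] {μ : Measure α} {ψ : α → E}
    {c : α → ι → ℝ} {B : α → ℝ} (hψ : AEStronglyMeasurable ψ μ)
    (hcm : ∀ k, AEStronglyMeasurable (c · k) μ) (hc : ∀ s k, |c s k| ≤ B s) :
    AEStronglyMeasurable (fun s => spectralMultiplier v (c s) (ψ s)) μ := by
  refine aestronglyMeasurable_of_tendsto_ae atTop (fun n => ?_)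
    (ae_of_all _ fun s => (hv.summable_mul_inner_smul (hc s) (ψ s)).hasSum)
  refine Finset.aestronglyMeasurable_fun_sum _ fun k _ => ((hcm k).mul ?_).smul_const _
  exact (continuous_id.inner continuous_const).comp_aestronglyMeasurable hψ

end SpectralMultiplier

section WaveOperators

variable {L : ℝ}

lemma sqrt_alphaK_pos (hL : 0 < L) (k : ℕ) : 0 < √(alphaK L k) :=
  sqrt_pos.mpr (by unfold alphaK; positivity)

lemma abs_sin_mul_div_sub_le {a : ℝ} (ha : 0 < a) (x y : ℝ) :
    |sin (a * x) / a - sin (a * y) / a| ≤ |x - y| := by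
  rw [div_sub_div_same, abs_div, abs_of_pos ha, div_le_iff₀ ha]
  calc |sin (a * x) - sin (a * y)| ≤ |a * x - a * y| := abs_sin_sub_sin_le _ _
    _ = |x - y| * a := by rw [← mul_sub, abs_mul, abs_of_pos ha, mul_comm]

lemma abs_sin_mul_div_le {a : ℝ} (ha : 0 < a) (x : ℝ) : |sin (a * x) / a| ≤ |x| := by
  simpa using abs_sin_mul_div_sub_le ha x 0

lemma Sop_eq_spectralMultiplier (L t : ℝ) (h : Hsp L) :
    Sop L t h = spectralMultiplier (eb L) (fun k => sin (√(alphaK L k) * t) / √(alphaK L k)) h :=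
  rfl

lemma Sop'_eq_spectralMultiplier (L t : ℝ) (h : Hsp L) :
    Sop' L t h = spectralMultiplier (eb L) (fun k => cos (√(alphaK L k) * t)) h :=
  rfl

lemma Sop_zero (L : ℝ) (h : Hsp L) : Sop L 0 h = 0 := by
  simp [Sop]

lemma norm_Sop_le (hL : 0 < L) (t : ℝ) (h : Hsp L) : ‖Sop L t h‖ ≤ |t| * ‖h‖ :=
  (orthonormal_eb hL).norm_spectralMultiplier_le (abs_nonneg t)
    (fun k => abs_sin_mul_div_le (sqrt_alphaK_pos hL k) t) h

lemma norm_Sop'_le (hL : 0 < L) (t : ℝ) (h : Hsp L) : ‖Sop' L t h‖ ≤ ‖h‖ := by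
  simpa [Sop'_eq_spectralMultiplier] using
    (orthonormal_eb hL).norm_spectralMultiplier_le zero_le_one
    (fun k => abs_cos_le_one (√(alphaK L k) * t)) h

lemma norm_Sop_sub_le (hL : 0 < L) (x y : ℝ) (h : Hsp L) :
    ‖Sop L x h - Sop L y h‖ ≤ |x - y| * ‖h‖ := by
  have hv := orthonormal_eb hL
  rw [Sop_eq_spectralMultiplier, Sop_eq_spectralMultiplier,
    hv.spectralMultiplier_sub (fun k => abs_sin_mul_div_le (sqrt_alphaK_pos hL k) x)
      (fun k => abs_sin_mul_div_le (sqrt_alphaK_pos hL k) y)]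
  exact hv.norm_spectralMultiplier_le (abs_nonneg _)
    (fun k => abs_sin_mul_div_sub_le (sqrt_alphaK_pos hL k) x y) h

lemma hasDerivAt_Sop (hL : 0 < L) (h : Hsp L) (t : ℝ) :
    HasDerivAt (fun u => Sop L u h) (Sop' L t h) t := by
  refine (orthonormal_eb hL).hasDerivAt_spectralMultiplier (K := 1)
    (fun x k => abs_sin_mul_div_le (sqrt_alphaK_pos hL k) x)
    (fun x y k => (abs_sin_mul_div_sub_le (sqrt_alphaK_pos hL k) x y).trans_eq (one_mul _).symm)
    (fun k => abs_cos_le_one _) (fun k => ?_) h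
  have ha := (sqrt_alphaK_pos hL k).ne'
  simpa [ha] using (((hasDerivAt_id t).const_mul (√(alphaK L k))).sin).div_const (√(alphaK L k))

lemma aestronglyMeasurable_Sop (hL : 0 < L) {μ : Measure ℝ} {ψ : ℝ → Hsp L} {τ : ℝ → ℝ}
    (hψ : AEStronglyMeasurable ψ μ) (hτ : Measurable τ) :
    AEStronglyMeasurable (fun s => Sop L (τ s) (ψ s)) μ :=
  (orthonormal_eb hL).aestronglyMeasurable_spectralMultiplier hψ
    (fun _ => (by fun_prop : Measurable _).aestronglyMeasurable)
    (fun s k => abs_sin_mul_div_le (sqrt_alphaK_pos hL k) (τ s))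

lemma aestronglyMeasurable_Sop' (hL : 0 < L) {μ : Measure ℝ} {ψ : ℝ → Hsp L} {τ : ℝ → ℝ}
    (hψ : AEStronglyMeasurable ψ μ) (hτ : Measurable τ) :
    AEStronglyMeasurable (fun s => Sop' L (τ s) (ψ s)) μ :=
  (orthonormal_eb hL).aestronglyMeasurable_spectralMultiplier hψ
    (fun _ => (by fun_prop : Measurable _).aestronglyMeasurable)
    (fun s k => abs_cos_le_one (√(alphaK L k) * τ s))

end WaveOperators

section Duhamel

open Set Filter

variable {L : ℝ}

lemma sq_integral_le_measureReal_mul_integral_sq {α : Type*} [MeasurableSpace α]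
    {μ : Measure α} [IsFiniteMeasure μ] {f : α → ℝ} (hf : MemLp f 2 μ) :
    (∫ a, f a ∂μ) ^ 2 ≤ μ.real univ * ∫ a, f a ^ 2 ∂μ := by
  set F : Lp ℝ 2 μ := hf.toLp f
  set e : Lp ℝ 2 μ := (memLp_const (1 : ℝ)).toLp fun _ => (1 : ℝ)
  have hinner : ∀ g h : Lp ℝ 2 μ, ⟪g, h⟫_ℝ = ∫ a, g a * h a ∂μ := fun g h => by
    simp [L2.inner_def, mul_comm]
  have heF : ⟪e, F⟫_ℝ = ∫ a, f a ∂μ := by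
    rw [hinner]
    refine integral_congr_ae ?_
    filter_upwards [hf.coeFn_toLp, (memLp_const (1 : ℝ)).coeFn_toLp] with a hF he
    rw [hF, he, one_mul]
  have hFF : ‖F‖ ^ 2 = ∫ a, f a ^ 2 ∂μ := by
    rw [← real_inner_self_eq_norm_sq, hinner]
    refine integral_congr_ae ?_
    filter_upwards [hf.coeFn_toLp] with a hF
    simp [F, hF, sq]
  have hee : ‖e‖ ^ 2 = μ.real univ := by
    rw [← real_inner_self_eq_norm_sq, hinner, ← mul_one (μ.real univ), ← smul_eq_mul,
      ← integral_const]
    refine integral_congr_ae ?_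
    filter_upwards [(memLp_const (1 : ℝ)).coeFn_toLp] with a he
    rw [he, one_mul]
  calc (∫ a, f a ∂μ) ^ 2 = ⟪e, F⟫_ℝ ^ 2 := by rw [heF]
    _ ≤ (‖e‖ * ‖F‖) ^ 2 := sq_le_sq.mpr ((abs_real_inner_le_norm e F).trans (le_abs_self _))
    _ = μ.real univ * ∫ a, f a ^ 2 ∂μ := by rw [mul_pow, hee, hFF]

lemma intervalIntegral_Sop_eq_setIntegral (φ : ℝ → Hsp L) {r T : ℝ} (hr : 0 ≤ r) (hrT : r ≤ T) :
    ∫ s in (0:ℝ)..r, Sop L (r - s) (φ s) = ∫ s in Ioc 0 T, Sop L (max (r - s) 0) (φ s) := by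
  have hcut : ∀ s, Sop L (max (r - s) 0) (φ s)
      = (Iic r).indicator (fun s => Sop L (r - s) (φ s)) s := by
    intro s
    by_cases hs : s ≤ r
    · rw [indicator_of_mem (show s ∈ Iic r from hs), max_eq_left (sub_nonneg.mpr hs)]
    · rw [indicator_of_notMem (show s ∉ Iic r from hs),
        max_eq_right (sub_nonpos.mpr (not_le.mp hs).le), Sop_zero]
  simp_rw [hcut]
  rw [setIntegral_indicator measurableSet_Iic, Ioc_inter_Iic, min_eq_right hrT,
    intervalIntegral.integral_of_le hr]

lemma hasDerivAt_setIntegral_Sop (hL : 0 < L) {T : ℝ} {φ : ℝ → Hsp L}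
    (hφm : AEStronglyMeasurable φ (volume.restrict (Ioc 0 T)))
    (hφ : IntegrableOn (fun s => ‖φ s‖) (Ioc 0 T)) (t : ℝ) :
    HasDerivAt (fun r => ∫ s in Ioc 0 T, Sop L (max (r - s) 0) (φ s))
      (∫ s in Ioc 0 T, (Iic t).indicator (fun s => Sop' L (t - s) (φ s)) s) t := by
  refine (hasDerivAt_integral_of_dominated_loc_of_lip (bound := fun s => ‖φ s‖) univ_mem
    (Eventually.of_forall fun r => aestronglyMeasurable_Sop hL hφm (by fun_prop))
    ?integrable ((aestronglyMeasurable_Sop' hL hφm (by fun_prop)).indicator measurableSet_Iic)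
    (ae_of_all _ fun s => ?lipschitz) hφ ?deriv).2
  case integrable =>
    refine (hφ.const_mul |t|).mono' (aestronglyMeasurable_Sop hL hφm (by fun_prop)) ?_
    filter_upwards [ae_restrict_mem measurableSet_Ioc] with s hs
    refine (norm_Sop_le hL _ _).trans (mul_le_mul_of_nonneg_right ?_ (norm_nonneg _))
    rw [abs_of_nonneg (le_max_right _ _)]
    exact max_le (by linarith [le_abs_self t, hs.1]) (abs_nonneg t)
  case lipschitz =>
    refine LipschitzWith.lipschitzOnWith (LipschitzWith.of_dist_le_mul fun x y => ?_)
    rw [dist_eq_norm, Real.dist_eq, coe_nnabs, abs_norm, mul_comm]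
    exact (norm_Sop_sub_le hL _ _ _).trans
      (mul_le_mul_of_nonneg_right ((abs_max_sub_max_le_abs _ _ _).trans_eq (by ring_nf))
        (norm_nonneg _))
  case deriv =>
    filter_upwards [ae_restrict_of_ae (volume.ae_ne t)] with s hst
    rcases hst.lt_or_gt with hs | hs
    · rw [indicator_of_mem (show s ∈ Iic t from hs.le)]
      refine ((hasDerivAt_Sop hL (φ s) (t - s)).comp_sub_const t s).congr_of_eventuallyEq ?_
      filter_upwards [lt_mem_nhds hs] with r hr
      rw [max_eq_left (sub_nonneg.mpr hr.le)]
    · rw [indicator_of_notMem (show s ∉ Iic t from not_le.mpr hs)]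
      refine (hasDerivAt_const t (0 : Hsp L)).congr_of_eventuallyEq ?_
      filter_upwards [gt_mem_nhds hs] with r hr
      rw [max_eq_right (sub_nonpos.mpr hr.le), Sop_zero]

lemma hasDerivWithinAt_intervalIntegral_Sop (hL : 0 < L) {T t : ℝ} {φ : ℝ → Hsp L}
    (hφm : AEStronglyMeasurable φ (volume.restrict (Ioc 0 T)))
    (hφ : IntegrableOn (fun s => ‖φ s‖) (Ioc 0 T)) (ht0 : 0 ≤ t) (htT : t ≤ T) :
    HasDerivWithinAt (fun r => ∫ s in (0:ℝ)..r, Sop L (r - s) (φ s))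
      (∫ s in (0:ℝ)..t, Sop' L (t - s) (φ s)) (Icc 0 T) t := by
  have hderiv := hasDerivAt_setIntegral_Sop hL hφm hφ t
  rw [setIntegral_indicator measurableSet_Iic, Ioc_inter_Iic, min_eq_right htT,
    ← intervalIntegral.integral_of_le ht0] at hderiv
  exact hderiv.hasDerivWithinAt.congr
    (fun r hr => intervalIntegral_Sop_eq_setIntegral φ hr.1 hr.2)
    (intervalIntegral_Sop_eq_setIntegral φ ht0 htT)

lemma sq_norm_intervalIntegral_Sop'_le (hL : 0 < L) {t : ℝ} {φ : ℝ → Hsp L} (ht : 0 ≤ t)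
    (hφ : MemLp (fun s => ‖φ s‖) 2 (volume.restrict (Ioc 0 t))) :
    ‖∫ s in (0:ℝ)..t, Sop' L (t - s) (φ s)‖ ^ 2 ≤ t * ∫ s in (0:ℝ)..t, ‖φ s‖ ^ 2 := by
  calc ‖∫ s in (0:ℝ)..t, Sop' L (t - s) (φ s)‖ ^ 2 ≤ (∫ s in (0:ℝ)..t, ‖φ s‖) ^ 2 := by
        gcongr
        exact intervalIntegral.norm_integral_le_of_norm_le ht
          (ae_of_all _ fun s _ => norm_Sop'_le hL _ _)
          ((intervalIntegrable_iff_integrableOn_Ioc_of_le ht).mpr (hφ.integrable one_le_two))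
    _ ≤ t * ∫ s in (0:ℝ)..t, ‖φ s‖ ^ 2 := by
        simpa [intervalIntegral.integral_of_le ht, ht] using
          sq_integral_le_measureReal_mul_integral_sq hφ

end Duhamel

theorem stmt_11_general (L : ℝ) (hL : 0 < L) (T : ℝ) (φ : ℝ → Hsp L)
    (hmeas : AEStronglyMeasurable φ (volume.restrict (Set.Ioc (0:ℝ) T)))
    (hint : IntervalIntegrable (fun s => ‖φ s‖ ^ 2) volume 0 T) :
    ∀ t ∈ Set.Icc (0:ℝ) T,
      HasDerivWithinAt (fun r => ∫ s in (0:ℝ)..r, Sop L (r - s) (φ s))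
        (∫ s in (0:ℝ)..t, Sop' L (t - s) (φ s)) (Set.Icc (0:ℝ) T) t ∧
      ‖∫ s in (0:ℝ)..t, Sop' L (t - s) (φ s)‖ ^ 2 ≤ T * ∫ s in (0:ℝ)..T, ‖φ s‖ ^ 2 := by
  rintro t ⟨ht0, htT⟩
  have hφ : MemLp (fun s => ‖φ s‖) 2 (volume.restrict (Set.Ioc 0 T)) :=
    (memLp_two_iff_integrable_sq hmeas.norm).mpr hint.1
  refine ⟨hasDerivWithinAt_intervalIntegral_Sop hL hmeas (hφ.integrable one_le_two) ht0 htT, ?_⟩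
  calc ‖∫ s in (0:ℝ)..t, Sop' L (t - s) (φ s)‖ ^ 2 ≤ t * ∫ s in (0:ℝ)..t, ‖φ s‖ ^ 2 :=
        sq_norm_intervalIntegral_Sop'_le hL ht0
          (hφ.mono_measure (Measure.restrict_mono (Set.Ioc_subset_Ioc_right htT) le_rfl))
    _ ≤ T * ∫ s in (0:ℝ)..T, ‖φ s‖ ^ 2 :=
        mul_le_mul htT (intervalIntegral.integral_mono_interval le_rfl ht0 htT
          (ae_of_all _ fun _ => sq_nonneg _) hint)
          (intervalIntegral.integral_nonneg ht0 fun _ _ => sq_nonneg _) (ht0.trans htT)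

/-- Deterministic Proposition 2.1, second estimate: with
`ν_t = ∫₀ᵗ S_{t−s} φ_s ds`, the map `t ↦ ν_t` is differentiable on `[0,T]` with derivative
`ν̇_t = ∫₀ᵗ S'_{t−s} φ_s ds`, and `‖ν̇_t‖² ≤ T ∫₀ᵀ ‖φ_s‖² ds` for every `t ∈ [0,T]`. -/
theorem stmt_11 (L : ℝ) (hL : 0 < L) (T : ℝ) (hT : 0 < T) (φ : ℝ → Hsp L)
    (hmeas : AEStronglyMeasurable φ (volume.restrict (Set.Ioc (0:ℝ) T)))
    (hint : IntervalIntegrable (fun s => ‖φ s‖ ^ 2) volume 0 T) :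
    ∀ t ∈ Set.Icc (0:ℝ) T,
      HasDerivWithinAt (fun r => ∫ s in (0:ℝ)..r, Sop L (r - s) (φ s))
        (∫ s in (0:ℝ)..t, Sop' L (t - s) (φ s)) (Set.Icc (0:ℝ) T) t ∧
      ‖∫ s in (0:ℝ)..t, Sop' L (t - s) (φ s)‖ ^ 2 ≤ T * ∫ s in (0:ℝ)..T, ‖φ s‖ ^ 2 :=
  stmt_11_general L hL T φ hmeas hint
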